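/- Let X be a nonnegative random variable such that E[X^i] ≤ (b₁ + 2 b₂ i)^i for all integers i ≥ 1, where b₁, b₂ ≥ 0 satisfy 4 b₂ e ≤ 1/2 (equivalently the parameter scaling τ ≤ 1/(16(b₁+b₂)) after substitution). Then E[e^X] ≤ e^{2 b₁} + 2. -/

import Mathlib

/-!
Expand `e^X = ∑ X^i / i!` and integrate term by term (monotone convergence). Splitting
`(b₁ + 2 b₂ i)^i ≤ (2 b₁)^i + (4 b₂ i)^i`, the first parts sum to at most `e^{2 b₁}`, while
`i! ≥ (i/e)^i` and `4 b₂ e ≤ 1/2` bound the second parts by the geometric series `∑ 2^{-i} ≤ 2`.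
-/

open MeasureTheory Finset Filter
open scoped Nat Topology

lemma add_pow_le_two_mul_pow_add_two_mul_pow {R : Type*} [CommSemiring R] [LinearOrder R]
    [IsStrictOrderedRing R] [ExistsAddOfLE R] {a b : R} (ha : 0 ≤ a) (hb : 0 ≤ b) (n : ℕ) :
    (a + b) ^ n ≤ (2 * a) ^ n + (2 * b) ^ n := by
  have h2 : (2 : R) ^ (n - 1) ≤ 2 ^ n := pow_le_pow_right₀ one_le_two (Nat.sub_le n 1)
  calc (a + b) ^ n ≤ 2 ^ (n - 1) * (a ^ n + b ^ n) := add_pow_le ha hb n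
    _ ≤ 2 ^ n * (a ^ n + b ^ n) := by gcongr
    _ = (2 * a) ^ n + (2 * b) ^ n := by ring

lemma pow_self_div_factorial_le_exp_one_pow (n : ℕ) : (n : ℝ) ^ n / n ! ≤ Real.exp 1 ^ n := by
  simpa only [← Real.exp_nat_mul, mul_one] using
    Real.pow_div_factorial_le_exp (n : ℝ) (Nat.cast_nonneg n) n

lemma moment_bound_div_factorial_le_add_half_pow {b₁ b₂ : ℝ} (hb₁ : 0 ≤ b₁) (hb₂ : 0 ≤ b₂)
    (hsmall : 4 * b₂ * Real.exp 1 ≤ 1 / 2) (i : ℕ) :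
    (b₁ + 2 * b₂ * i) ^ i / i ! ≤ (2 * b₁) ^ i / i ! + (1 / 2) ^ i := by
  have hlinear : (4 * b₂ * i) ^ i / i ! ≤ (1 / 2) ^ i :=
    calc (4 * b₂ * i) ^ i / i ! = (4 * b₂) ^ i * ((i : ℝ) ^ i / i !) := by rw [mul_pow]; ring
      _ ≤ (4 * b₂) ^ i * Real.exp 1 ^ i := by gcongr; exact pow_self_div_factorial_le_exp_one_pow i
      _ = (4 * b₂ * Real.exp 1) ^ i := (mul_pow _ _ _).symm
      _ ≤ (1 / 2) ^ i := by gcongr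
  calc (b₁ + 2 * b₂ * i) ^ i / i ! ≤ ((2 * b₁) ^ i + (2 * (2 * b₂ * i)) ^ i) / i ! := by
        gcongr
        exact add_pow_le_two_mul_pow_add_two_mul_pow hb₁ (by positivity) i
    _ = (2 * b₁) ^ i / i ! + (4 * b₂ * i) ^ i / i ! := by ring
    _ ≤ (2 * b₁) ^ i / i ! + (1 / 2) ^ i := by gcongr

theorem integral_exp_le_of_sum_integral_pow_div_factorial_le {Ω : Type*} [MeasurableSpace Ω]
    {μ : Measure Ω} {X : Ω → ℝ} (hX : 0 ≤ᵐ[μ] X) {C : ℝ}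
    (hC : ∀ n, ∑ i ∈ range n, (∫ ω, X ω ^ i ∂μ) / i ! ≤ C) :
    ∫ ω, Real.exp (X ω) ∂μ ≤ C := by
  by_cases hint : Integrable (fun ω => Real.exp (X ω)) μ
  swap
  -- the integral is then the junk value `0`, and `0 ≤ C` is the case `n = 0` of `hC`
  · simpa [integral_undef hint] using hC 0
  have hXmeas : AEMeasurable X μ := by
    simpa only [Function.comp_def, Real.log_exp] using
      Real.measurable_log.comp_aemeasurable hint.aemeasurable
  have hterm_int (i : ℕ) : Integrable (fun ω => X ω ^ i / i !) μ := by
    refine hint.mono ((hXmeas.pow_const i).div_const _).aestronglyMeasurable ?_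
    filter_upwards [hX] with ω (hω : 0 ≤ X ω)
    rw [Real.norm_of_nonneg (by positivity), Real.norm_of_nonneg (Real.exp_pos _).le]
    exact Real.pow_div_factorial_le_exp _ hω i
  have hpartial_int (n : ℕ) : Integrable (fun ω => ∑ i ∈ range n, X ω ^ i / i !) μ :=
    integrable_finsetSum _ fun i _ => hterm_int i
  have hmono : ∀ᵐ ω ∂μ, Monotone fun n => ∑ i ∈ range n, X ω ^ i / i ! := by
    filter_upwards [hX] with ω (hω : 0 ≤ X ω)
    exact fun m n hmn => sum_mono_set_of_nonneg (fun i => by positivity) (range_mono hmn)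
  have htendsto : ∀ᵐ ω ∂μ,
      Tendsto (fun n => ∑ i ∈ range n, X ω ^ i / i !) atTop (𝓝 (Real.exp (X ω))) :=
    ae_of_all _ fun ω =>
      (Real.exp_eq_exp_ℝ ▸ NormedSpace.expSeries_div_hasSum_exp (X ω)).tendsto_sum_nat
  refine le_of_tendsto
    (integral_tendsto_of_tendsto_of_monotone hpartial_int hint hmono htendsto)
    (Eventually.of_forall fun n => ?_)
  rw [integral_finsetSum _ fun i _ => hterm_int i]
  simpa only [integral_div] using hC n

theorem stmt3 {Ω : Type*} [MeasurableSpace Ω] (P : Measure Ω) [IsProbabilityMeasure P]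
    (X : Ω → ℝ) (hX : ∀ ω, 0 ≤ X ω) (b₁ b₂ : ℝ) (hb₁ : 0 ≤ b₁) (hb₂ : 0 ≤ b₂)
    (hsmall : 4 * b₂ * Real.exp 1 ≤ 1/2)
    (hmom : ∀ i : ℕ, 1 ≤ i → ∫ ω, (X ω) ^ i ∂P ≤ (b₁ + 2 * b₂ * i) ^ i) :
    ∫ ω, Real.exp (X ω) ∂P ≤ Real.exp (2 * b₁) + 2 := by
  have hmom_all (i : ℕ) : ∫ ω, X ω ^ i ∂P ≤ (b₁ + 2 * b₂ * i) ^ i := by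
    rcases i with _ | i
    · simp
    · exact hmom _ (Nat.succ_pos i)
  refine integral_exp_le_of_sum_integral_pow_div_factorial_le (ae_of_all _ hX) fun n => ?_
  calc ∑ i ∈ range n, (∫ ω, X ω ^ i ∂P) / i !
      ≤ ∑ i ∈ range n, ((2 * b₁) ^ i / i ! + (1 / 2) ^ i) := by
        gcongr with i
        exact (div_le_div_of_nonneg_right (hmom_all i) (by positivity)).trans
          (moment_bound_div_factorial_le_add_half_pow hb₁ hb₂ hsmall i)
    _ = ∑ i ∈ range n, (2 * b₁) ^ i / i ! + ∑ i ∈ range n, (1 / 2 : ℝ) ^ i := sum_add_distrib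
    _ ≤ Real.exp (2 * b₁) + 2 :=
        add_le_add (Real.sum_le_exp_of_nonneg (by positivity) n) (sum_geometric_two_le n)
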